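/- arXiv:2410.01452 — 3 statements merged into one kernel-verified Lean document; each statement's English description precedes it below -/
import Mathlib

section
/- Let ρ_i be representations of a group G on vector spaces X_i, i = 0,…,N, let σ_i: X_{i+1} → X_{i+1} be G-equivariant maps, and for a tuple A = (A_0,…,A_{N-1}) of linear maps A_i: X_i → X_{i+1} define the network Φ_A(x) by x_0 = x, x_{i+1} = σ_i(A_i x_i), Φ_A(x) = x_N. Let ρ act on tuples by (ρ(g)A)_i = ρ_{i+1}(g) ∘ A_i ∘ ρ_i(g)^{-1}. Then Φ_A(ρ_0(g)x) = ρ_N(g) Φ_{ρ(g^{-1})A}(x) for all g ∈ G and x ∈ X_0. -/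
/-- The layered network: `x_0 = x`, `x_{i+1} = σ_i (A_i x_i)`, `Φ_A(x) = x_N`. -/
def Phi {X : ℕ → Type*} [∀ i, AddCommGroup (X i)] [∀ i, Module ℝ (X i)]
    (σ : ∀ i : ℕ, X (i + 1) → X (i + 1)) (A : ∀ i : ℕ, X i →ₗ[ℝ] X (i + 1)) :
    (n : ℕ) → X 0 → X n
  | 0, x => x
  | n + 1, x => σ n (A n (Phi σ A n x))

theorem Phi_naturality {X Y : ℕ → Type*}
    [∀ i, AddCommGroup (X i)] [∀ i, Module ℝ (X i)]
    [∀ i, AddCommGroup (Y i)] [∀ i, Module ℝ (Y i)]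
    {σ : ∀ i : ℕ, X (i + 1) → X (i + 1)} {τ : ∀ i : ℕ, Y (i + 1) → Y (i + 1)}
    {A : ∀ i : ℕ, X i →ₗ[ℝ] X (i + 1)} {B : ∀ i : ℕ, Y i →ₗ[ℝ] Y (i + 1)}
    (T : ∀ i : ℕ, X i → Y i)
    (hσ : ∀ i y, τ i (T (i + 1) y) = T (i + 1) (σ i y))
    (hA : ∀ i x, B i (T i x) = T (i + 1) (A i x)) (n : ℕ) (x : X 0) :
    Phi τ B n (T 0 x) = T n (Phi σ A n x) := by
  induction n with
  | zero => rfl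
  | succ n ih => simp only [Phi, ih, hA, hσ]

/-- With `G`-equivariant nonlinearities `σ_i` and the lifted action
`(ρ(g)A)_i = ρ_{i+1}(g) ∘ A_i ∘ ρ_i(g)⁻¹` on parameters, one has
`Φ_A(ρ_0(g)x) = ρ_N(g) Φ_{ρ(g⁻¹)A}(x)`. -/
theorem stmt8 {G : Type*} [Group G] {X : ℕ → Type*}
    [∀ i, AddCommGroup (X i)] [∀ i, Module ℝ (X i)]
    (ρ : ∀ i : ℕ, G →* (X i ≃ₗ[ℝ] X i))
    (σ : ∀ i : ℕ, X (i + 1) → X (i + 1))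
    (hσ : ∀ (i : ℕ) (g : G) (y : X (i + 1)), σ i (ρ (i + 1) g y) = ρ (i + 1) g (σ i y))
    (A : ∀ i : ℕ, X i →ₗ[ℝ] X (i + 1)) (N : ℕ) (g : G) (x : X 0) :
    Phi σ A N (ρ 0 g x)
      = ρ N g (Phi σ
          (fun i => (ρ (i + 1) g⁻¹).toLinearMap ∘ₗ A i ∘ₗ (ρ i g⁻¹).symm.toLinearMap)
          N x) := by
  have symm_inv : ∀ i, (ρ i g⁻¹).symm = ρ i g := fun i => by rw [map_inv]; rfl
  have apply_inv_apply : ∀ i z, ρ i g (ρ i g⁻¹ z) = z := fun i z => by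
    rw [map_inv, LinearEquiv.coe_inv, LinearEquiv.apply_symm_apply]
  refine Phi_naturality (fun i => ρ i g) (fun i => hσ i g) (fun i y => ?_) N x
  simp only [LinearMap.coe_comp, LinearEquiv.coe_coe, Function.comp_apply, symm_inv,
    apply_inv_apply]
end

section
/- Let ρ: G → U(H) be a unitary representation, Π the orthogonal projection onto a linear subspace T with ρ(g)T ⊆ T for all g, and let ∇R^g be a random vector field on H satisfying ∇R^g(ρ(h)A) ∼ ρ(h)∇R^g(A) for all h ∈ G, A ∈ H (equivariance in distribution), with independent fresh draws at each step. Define the SGD iteration A^{t+1} = A^t − γ_t Π ∇R^g(A^t) with step sizes γ_t. If ρ(h)A^0 ∼ A^0 for all h ∈ G and A^0 is independent of the random fields, then ρ(h)A^t ∼ A^t for all h ∈ G and all t ≥ 0. -/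
open MeasureTheory

/-!
Since `ρ(h)` is a linear isometry preserving `T`, it commutes with the projection `Π`, so
`ρ(h) A^{t+1} = ρ(h) A^t - γ_t Π ρ(h) ∇R^g(A^t)`. By independence the law of `(A^t, ∇R^g)` is a
product, and conditionally on `A^t = a` the equivariance in distribution of the field lets us
replace `ρ(h) ∇R^g(a)` by `∇R^g(ρ(h) a)`. Thus `ρ(h) A^{t+1}` has the law of one SGD step started
from `ρ(h) A^t`, which by induction has the law of `A^t`.
-/

theorem Submodule.starProjection_apply_comm_of_forall_mem
    {𝕜 E G : Type*} [RCLike 𝕜] [NormedAddCommGroup E] [InnerProductSpace 𝕜 E] [Group G]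
    (ρ : G →* (E ≃ₗᵢ[𝕜] E)) (K : Submodule 𝕜 E) [K.HasOrthogonalProjection]
    (hK : ∀ g : G, ∀ v ∈ K, ρ g v ∈ K) (g : G) (x : E) :
    K.starProjection (ρ g x) = ρ g (K.starProjection x) := by
  have hmap : K.map ((ρ g).toLinearEquiv : E →ₗ[𝕜] E) = K := by
    refine le_antisymm (Submodule.map_le_iff_le_comap.2 fun v hv => hK g v hv) fun v hv => ?_
    refine ⟨ρ g⁻¹ v, hK g⁻¹ v hv, ?_⟩
    simp
  simpa only [hmap, LinearIsometryEquiv.symm_apply_apply] using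
    K.starProjection_map_apply (ρ g) (ρ g x)

theorem MeasureTheory.Measure.map_prod_congr_of_map_slice {α β γ : Type*} [MeasurableSpace α]
    [MeasurableSpace β] [MeasurableSpace γ] {μ : Measure α} {ν : Measure β} [SFinite ν]
    {F₁ F₂ : α × β → γ} (hF₁ : Measurable F₁) (hF₂ : Measurable F₂)
    (h : ∀ a, ν.map (fun b => F₁ (a, b)) = ν.map (fun b => F₂ (a, b))) :
    (μ.prod ν).map F₁ = (μ.prod ν).map F₂ := by
  ext s hs
  rw [Measure.map_apply hF₁ hs, Measure.map_apply hF₂ hs, Measure.prod_apply (hF₁ hs),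
    Measure.prod_apply (hF₂ hs)]
  refine lintegral_congr fun a => ?_
  change ν ((fun b => F₁ (a, b)) ⁻¹' s) = ν ((fun b => F₂ (a, b)) ⁻¹' s)
  have hF₁a : Measurable fun b => F₁ (a, b) := hF₁.comp measurable_prodMk_left
  have hF₂a : Measurable fun b => F₂ (a, b) := hF₂.comp measurable_prodMk_left
  rw [← Measure.map_apply hF₁a hs, ← Measure.map_apply hF₂a hs, h a]

theorem MeasureTheory.Measure.map_prod_comp_eq_of_map_slice {α β γ : Type*} [MeasurableSpace α]
    [MeasurableSpace β] [MeasurableSpace γ] {μ : Measure α} {ν : Measure β} [SFinite μ]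
    [SFinite ν] {F : α × β → γ} {φ : α → α} {ψ : γ → γ} (hF : Measurable F)
    (hφ : Measurable φ) (hψ : Measurable ψ) (hμ : μ.map φ = μ)
    (h : ∀ a, ν.map (fun b => ψ (F (a, b))) = ν.map (fun b => F (φ a, b))) :
    (μ.prod ν).map (ψ ∘ F) = (μ.prod ν).map F := calc
  (μ.prod ν).map (ψ ∘ F) = (μ.prod ν).map (F ∘ Prod.map φ id) :=
    Measure.map_prod_congr_of_map_slice (hψ.comp hF) (hF.comp (hφ.prodMap measurable_id)) h
  _ = ((μ.map φ).prod (ν.map id)).map F := by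
    rw [Measure.map_prod_map _ _ hφ measurable_id, Measure.map_map hF (hφ.prodMap measurable_id)]
  _ = (μ.prod ν).map F := by rw [hμ, Measure.map_id]

theorem ProbabilityTheory.IndepFun.map_comp_prodMk {Ω α β γ : Type*} [MeasurableSpace Ω]
    [MeasurableSpace α] [MeasurableSpace β] [MeasurableSpace γ] {P : Measure Ω}
    [IsFiniteMeasure P] {X : Ω → α} {Y : Ω → β} (hXY : IndepFun X Y P) (hX : Measurable X)
    (hY : Measurable Y) {F : α × β → γ} (hF : Measurable F) :
    P.map (fun ω => F (X ω, Y ω)) = ((P.map X).prod (P.map Y)).map F := by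
  rw [← (indepFun_iff_map_prod_eq_prod_map_map hX.aemeasurable hY.aemeasurable).1 hXY,
    Measure.map_map hF (hX.prodMk hY)]
  rfl

section ProjectedSGD

variable {G Θ H : Type*} [Group G] [MeasurableSpace Θ] [NormedAddCommGroup H]
  [InnerProductSpace ℝ H] [MeasurableSpace H] [BorelSpace H]

noncomputable def projSGDStep (T : Submodule ℝ H) [T.HasOrthogonalProjection]
    (V : Θ → H → H) (γ : ℝ) (p : H × Θ) : H :=
  p.1 - γ • T.starProjection (V p.2 p.1)

theorem measurable_projSGDStep [SecondCountableTopology H] (T : Submodule ℝ H)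
    [T.HasOrthogonalProjection] {V : Θ → H → H} (hV : Measurable (Function.uncurry V)) (γ : ℝ) :
    Measurable (projSGDStep T V γ) :=
  measurable_fst.sub ((T.starProjection.continuous.measurable.comp
    (hV.comp measurable_swap)).const_smul γ)

theorem map_projSGDStep_slice (ρ : G →* (H ≃ₗᵢ[ℝ] H)) (T : Submodule ℝ H)
    [T.HasOrthogonalProjection] (hT : ∀ g : G, ∀ v ∈ T, ρ g v ∈ T) {V : Θ → H → H}
    (hV : Measurable (Function.uncurry V)) (γ : ℝ) {ν : Measure Θ} (g : G)
    (hequiv : ∀ B, ν.map (fun θ => V θ (ρ g B)) = ν.map (fun θ => ρ g (V θ B))) (a : H) :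
    ν.map (fun θ => ρ g (projSGDStep T V γ (a, θ))) =
      ν.map (fun θ => projSGDStep T V γ (ρ g a, θ)) := by
  set step : H → H := fun v => ρ g a - γ • T.starProjection v
  have hstep : Measurable step := by fun_prop
  have hρ : Measurable (ρ g) := (ρ g).continuous.measurable
  have hcomm :
      (fun θ => ρ g (projSGDStep T V γ (a, θ))) = step ∘ fun θ => ρ g (V θ a) := by
    funext θ
    simp [projSGDStep, step, T.starProjection_apply_comm_of_forall_mem ρ hT]
  have hVa : Measurable fun θ => ρ g (V θ a) := hρ.comp hV.of_uncurry_right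
  have hVga : Measurable fun θ => V θ (ρ g a) := hV.of_uncurry_right
  rw [hcomm, ← Measure.map_map hstep hVa, ← hequiv, Measure.map_map hstep hVga]
  rfl

end ProjectedSGD

/-- For the projected SGD iteration
`A^{t+1} = A^t − γ_t Π ∇R^g(A^t)` driven by i.i.d.-in-time random vector fields
`V (ξ t ·)` that are `G`-equivariant in distribution, with `Π` the orthogonal projection
onto a `G`-invariant subspace `T` and a `G`-invariantly distributed `A^0` independent of
the fields, the distribution of `A^t` remains `G`-invariant for all `t`. -/
theorem stmt11 {G Ω Θ : Type*} [Group G] [MeasurableSpace Ω] [MeasurableSpace Θ]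
    (P : Measure Ω) [IsProbabilityMeasure P]
    {H : Type*} [NormedAddCommGroup H] [InnerProductSpace ℝ H] [FiniteDimensional ℝ H]
    [MeasurableSpace H] [BorelSpace H]
    (ρ : G →* (H ≃ₗᵢ[ℝ] H)) (T : Submodule ℝ H)
    (hT : ∀ g : G, ∀ v ∈ T, ρ g v ∈ T)
    (V : Θ → H → H) (hV : Measurable (Function.uncurry V))
    (ξ : ℕ → Ω → Θ) (hξ : ∀ t, Measurable (ξ t))
    (γ : ℕ → ℝ)
    (A : ℕ → Ω → H) (hA : ∀ t, Measurable (A t))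
    (hrec : ∀ (t : ℕ) (ω : Ω),
      A (t + 1) ω = A t ω - γ t • ((T.orthogonalProjectionOnto (V (ξ t ω) (A t ω)) : H)))
    (hindep : ∀ t, ProbabilityTheory.IndepFun (A t) (ξ t) P)
    (hequiv : ∀ (t : ℕ) (h : G) (B : H),
      P.map (fun ω => V (ξ t ω) (ρ h B)) = P.map (fun ω => ρ h (V (ξ t ω) B)))
    (hA0 : ∀ h : G, P.map (fun ω => ρ h (A 0 ω)) = P.map (A 0)) :
    ∀ (h : G) (t : ℕ), P.map (fun ω => ρ h (A t ω)) = P.map (A t) := by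
  intro h t
  induction t with
  | zero => exact hA0 h
  | succ t ih =>
    have hρ : Measurable (ρ h) := (ρ h).continuous.measurable
    have hF := measurable_projSGDStep T hV (γ t)
    have hA_succ : A (t + 1) = fun ω => projSGDStep T V (γ t) (A t ω, ξ t ω) := funext (hrec t)
    have hlaw_inv : (P.map (A t)).map (ρ h) = P.map (A t) := by
      rw [Measure.map_map hρ (hA t)]; exact ih
    have hfield (B : H) : (P.map (ξ t)).map (fun θ => V θ (ρ h B)) =
        (P.map (ξ t)).map (fun θ => ρ h (V θ B)) := by
      have hρV : Measurable fun θ => ρ h (V θ B) := hρ.comp hV.of_uncurry_right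
      rw [Measure.map_map hV.of_uncurry_right (hξ t), Measure.map_map hρV (hξ t)]
      exact hequiv t h B
    calc P.map (fun ω => ρ h (A (t + 1) ω))
        = ((P.map (A t)).prod (P.map (ξ t))).map (ρ h ∘ projSGDStep T V (γ t)) := by
          rw [hA_succ]; exact (hindep t).map_comp_prodMk (hA t) (hξ t) (hρ.comp hF)
      _ = ((P.map (A t)).prod (P.map (ξ t))).map (projSGDStep T V (γ t)) :=
          Measure.map_prod_comp_eq_of_map_slice hF hρ hρ hlaw_inv
            (map_projSGDStep_slice ρ T hT hV (γ t) h hfield)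
      _ = P.map (A (t + 1)) := by
          rw [hA_succ]; exact ((hindep t).map_comp_prodMk (hA t) (hξ t) hF).symm
end

section
/- Let G be a compact group with Haar probability measure μ, ρ a unitary representation of G on H, and for data (x,y) define the augmented risk R_aug(A) = ∫_G E_D[ℓ(Φ_A(ρ_0(g)x), ρ_N(g)y)] dμ(g), where ℓ is G-invariant (ℓ(ρ_N(g)y, ρ_N(g)y') = ℓ(y,y')) and the nonlinearities of Φ are G-equivariant. Then R_aug(A) = ∫_G R(ρ(g)A) dμ(g), where R(A) = E_D[ℓ(Φ_A(x), y)]. -/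
open MeasureTheory

section Equivariance

variable {X : ℕ → Type*} [∀ i, AddCommGroup (X i)] [∀ i, Module ℝ (X i)]

/-- For `e i = ρ i g` this is the lifted representation `ρ(g)A` on parameter space. -/
def conjParams (e : ∀ i : ℕ, X i ≃ₗ[ℝ] X i) (A : ∀ i : ℕ, X i →ₗ[ℝ] X (i + 1)) :
    ∀ i : ℕ, X i →ₗ[ℝ] X (i + 1) :=
  fun i => (e (i + 1)).toLinearMap ∘ₗ A i ∘ₗ (e i).symm.toLinearMap

theorem Phi_conjParams_apply (σ : ∀ i : ℕ, X (i + 1) → X (i + 1)) (e : ∀ i : ℕ, X i ≃ₗ[ℝ] X i)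
    (hσ : ∀ (i : ℕ) (y : X (i + 1)), σ i (e (i + 1) y) = e (i + 1) (σ i y))
    (A : ∀ i : ℕ, X i →ₗ[ℝ] X (i + 1)) :
    ∀ (n : ℕ) (x : X 0), Phi σ (conjParams e A) n (e 0 x) = e n (Phi σ A n x)
  | 0, _ => rfl
  | n + 1, x => by
    simp only [Phi, Phi_conjParams_apply σ e hσ A n x, conjParams, LinearMap.coe_comp,
      Function.comp_apply, LinearEquiv.coe_coe, LinearEquiv.symm_apply_apply, hσ]

end Equivariance

theorem MonoidHom.linearEquiv_apply_inv_apply {G R V : Type*} [Group G] [Semiring R]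
    [AddCommMonoid V] [Module R V] (ρ : G →* (V ≃ₗ[R] V)) (g : G) (v : V) :
    ρ g (ρ g⁻¹ v) = v := by
  rw [← LinearEquiv.mul_apply, ← map_mul, mul_inv_cancel, map_one, LinearEquiv.coe_one, id_eq]

theorem stmt12_general {G : Type*} [Group G] [TopologicalSpace G] [IsTopologicalGroup G]
    [MeasurableSpace G] [BorelSpace G]
    (μ : Measure G) [μ.IsInvInvariant]
    {X : ℕ → Type*} [∀ i, AddCommGroup (X i)] [∀ i, Module ℝ (X i)]
    [∀ i, MeasurableSpace (X i)]
    (ρ : ∀ i : ℕ, G →* (X i ≃ₗ[ℝ] X i))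
    (σ : ∀ i : ℕ, X (i + 1) → X (i + 1))
    (hσ : ∀ (i : ℕ) (g : G) (y : X (i + 1)), σ i (ρ (i + 1) g y) = ρ (i + 1) g (σ i y))
    (N : ℕ)
    (D : Measure (X 0 × X N))
    (ℓ : X N → X N → ℝ)
    (hℓ : ∀ (g : G) (y y' : X N), ℓ (ρ N g y) (ρ N g y') = ℓ y y')
    (A : ∀ i : ℕ, X i →ₗ[ℝ] X (i + 1)) :
    ∫ g, (∫ q, ℓ (Phi σ A N (ρ 0 g q.1)) (ρ N g q.2) ∂D) ∂μ
      = ∫ g, (∫ q, ℓ (Phi σ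
            (fun i => (ρ (i + 1) g).toLinearMap ∘ₗ A i ∘ₗ (ρ i g).symm.toLinearMap)
            N q.1) q.2 ∂D) ∂μ := by
  rw [← integral_inv_eq_self _ μ]
  refine integral_congr_ae (.of_forall fun g => integral_congr_ae (.of_forall fun q => ?_))
  have hΦ := Phi_conjParams_apply σ (fun i => ρ i g) (hσ · g) A N (ρ 0 g⁻¹ q.1)
  simp only [MonoidHom.linearEquiv_apply_inv_apply] at hΦ
  change ℓ _ _ = ℓ (Phi σ (conjParams (fun i => ρ i g) A) N q.1) q.2
  rw [hΦ, ← hℓ g, MonoidHom.linearEquiv_apply_inv_apply]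

/-- For a compact group with Haar probability measure `μ`, a `G`-invariant
loss `ℓ` and a network with `G`-equivariant nonlinearities,
`R_aug(A) = ∫_G E_D[ℓ(Φ_A(ρ_0(g)x), ρ_N(g)y)] dμ(g) = ∫_G R(ρ(g)A) dμ(g)` where
`R(A) = E_D[ℓ(Φ_A(x), y)]` and `ρ` is the lifted representation on parameters. -/
theorem stmt12 {G : Type*} [Group G] [TopologicalSpace G] [IsTopologicalGroup G]
    [CompactSpace G] [MeasurableSpace G] [BorelSpace G]
    (μ : Measure G) [IsProbabilityMeasure μ] [μ.IsHaarMeasure] [μ.IsInvInvariant]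
    {X : ℕ → Type*} [∀ i, AddCommGroup (X i)] [∀ i, Module ℝ (X i)]
    [∀ i, MeasurableSpace (X i)]
    (ρ : ∀ i : ℕ, G →* (X i ≃ₗ[ℝ] X i))
    (σ : ∀ i : ℕ, X (i + 1) → X (i + 1))
    (hσ : ∀ (i : ℕ) (g : G) (y : X (i + 1)), σ i (ρ (i + 1) g y) = ρ (i + 1) g (σ i y))
    (N : ℕ)
    (D : Measure (X 0 × X N)) [IsProbabilityMeasure D]
    (ℓ : X N → X N → ℝ)
    (hℓ : ∀ (g : G) (y y' : X N), ℓ (ρ N g y) (ρ N g y') = ℓ y y')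
    (A : ∀ i : ℕ, X i →ₗ[ℝ] X (i + 1)) :
    ∫ g, (∫ q, ℓ (Phi σ A N (ρ 0 g q.1)) (ρ N g q.2) ∂D) ∂μ
      = ∫ g, (∫ q, ℓ (Phi σ
            (fun i => (ρ (i + 1) g).toLinearMap ∘ₗ A i ∘ₗ (ρ i g).symm.toLinearMap)
            N q.1) q.2 ∂D) ∂μ :=
  stmt12_general μ ρ σ hσ N D ℓ hℓ A
end
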